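/- Let P be symmetric stochastic with eigenvalue 1 simple and all other eigenvalues of absolute value < 1. If there exists k ∈ {1,...,K} such that ∏_{j=1}^n A_{j,k} > ∏_{j=1}^n A_{j,l} for all l ≠ k, then for every i = 1,...,n the iterates W_i^{(r)} of the normalized multiplicative filtering scheme (with ε = 0, initialized at W^{(0)} = A) converge to the k-th unit vector e_k as r → ∞. -/

import Mathlib

/-!
The log-ratios `y = log W_{·l} - log W_{·k}` evolve linearly, since the normalizations cancel:
`y^{(r+1)} = (I + P) y^{(r)}`. The symmetric matrix `(I + P)/2` has its eigenvalues in `(-1, 1]`,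
and its eigenvectors for `1` are the constants, so `2^{-r} y^{(r)}` tends to the constant vector
with value the mean of `y^{(0)}`, that is `(log ∏_j A_{jl} - log ∏_j A_{jk}) / n < 0`. Hence
`y^{(r)} → -∞` for every `l ≠ k`, i.e. `W_{il} / W_{ik} → 0`, and as the rows of `W` sum to one,
`W_i → e_k`.
-/

open Matrix Filter Topology Unitary Real

theorem Matrix.IsHermitian.exists_tendsto_pow {𝕜 ι : Type*} [RCLike 𝕜] [Fintype ι]
    [DecidableEq ι] {M : Matrix ι ι 𝕜} (hM : M.IsHermitian)
    (hspec : ∀ (μ : ℝ) (v : ι → 𝕜), v ≠ 0 → M *ᵥ v = μ • v → μ = 1 ∨ |μ| < 1) :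
    ∃ L, Tendsto (M ^ ·) atTop (𝓝 L) := by
  have hconv : ∀ j, ∃ c : 𝕜, Tendsto (fun r : ℕ => (hM.eigenvalues j : 𝕜) ^ r) atTop (𝓝 c) := by
    intro j
    rcases hspec _ _ (by simpa using hM.eigenvectorBasis.orthonormal.ne_zero j)
      (hM.mulVec_eigenvectorBasis j) with h | h
    · exact ⟨1, by simp [h]⟩
    · exact ⟨0, tendsto_pow_atTop_nhds_zero_of_norm_lt_one (by simpa using h)⟩
  choose c hc using hconv
  refine ⟨conjStarAlgAut 𝕜 _ hM.eigenvectorUnitary (diagonal c), ?_⟩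
  have hpow : ∀ r : ℕ, M ^ r = conjStarAlgAut 𝕜 _ hM.eigenvectorUnitary
      (diagonal fun j => (hM.eigenvalues j : 𝕜) ^ r) := by
    intro r
    conv_lhs => rw [hM.spectral_theorem]
    rw [← map_pow, diagonal_pow]
    rfl
  simp only [hpow, conjStarAlgAut_apply]
  refine (((continuous_const.mul continuous_id).mul continuous_const).tendsto _).comp ?_
  exact (continuous_id.matrix_diagonal.tendsto _).comp (tendsto_pi_nhds.mpr hc)

theorem Matrix.mulVec_eq_const_of_tendsto_pow {ι : Type*} [Fintype ι] [DecidableEq ι]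
    {M L : Matrix ι ι ℝ} (hM : M.IsSymm) (hM1 : M *ᵥ 1 = 1)
    (hfix : ∀ v : ι → ℝ, M *ᵥ v = v → ∃ c : ℝ, v = Function.const ι c)
    (hL : Tendsto (M ^ ·) atTop (𝓝 L)) (x : ι → ℝ) :
    L *ᵥ x = Function.const ι ((∑ j, x j) / Fintype.card ι) := by
  -- `M L = L`, `Lᵀ = L` and `L 1 = 1` all pass from the powers `M ^ r` to their limit.
  have hML : M * L = L := by
    refine tendsto_nhds_unique ?_ ((tendsto_add_atTop_iff_nat 1).mpr hL)
    simpa only [pow_succ'] using tendsto_const_nhds.mul hL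
  have hLT : Lᵀ = L := by
    refine tendsto_nhds_unique ?_ hL
    simpa only [Function.comp_def, id, transpose_pow, hM.eq] using
      (continuous_id.matrix_transpose.tendsto L).comp hL
  have hL1 : L *ᵥ 1 = 1 := by
    have hpow : ∀ r : ℕ, (M ^ r) *ᵥ 1 = 1 := by
      intro r
      induction r with
      | zero => simp
      | succ r ih => rw [pow_succ, ← mulVec_mulVec, hM1, ih]
    refine tendsto_nhds_unique
      ((continuous_id.matrix_mulVec continuous_const).tendsto L |>.comp hL) ?_
    simp only [Function.comp_def, id, hpow, tendsto_const_nhds]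
  obtain ⟨a, ha⟩ := hfix (L *ᵥ x) (by rw [mulVec_mulVec, hML])
  have hsum : ∑ j, (L *ᵥ x) j = ∑ j, x j := by
    rw [← one_dotProduct, ← one_dotProduct, dotProduct_mulVec, ← mulVec_transpose, hLT, hL1]
  rcases isEmpty_or_nonempty ι with hι | hι
  · exact Subsingleton.elim _ _
  rw [ha] at hsum ⊢
  simp only [Function.const_apply, Finset.sum_const, Finset.card_univ, nsmul_eq_mul] at hsum
  rw [← hsum, mul_div_cancel_left₀ _ (Nat.cast_ne_zero.mpr Fintype.card_ne_zero)]

theorem tendsto_two_inv_pow_smul_one_add_pow_mulVec {ι : Type*} [Fintype ι] [DecidableEq ι]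
    {P : Matrix ι ι ℝ} (hsym : P.IsSymm) (hrowP : ∀ i, ∑ j, P i j = 1)
    (hsimple : ∀ v : ι → ℝ, P *ᵥ v = v → ∃ c : ℝ, v = Function.const ι c)
    (hspec : ∀ (μ : ℝ) (v : ι → ℝ), v ≠ 0 → P *ᵥ v = μ • v → μ = 1 ∨ |μ| < 1) (x : ι → ℝ) :
    Tendsto (fun r : ℕ => (2⁻¹ : ℝ) ^ r • ((1 + P) ^ r *ᵥ x)) atTop
      (𝓝 (Function.const ι ((∑ j, x j) / Fintype.card ι))) := by
  set M : Matrix ι ι ℝ := (2⁻¹ : ℝ) • (1 + P) with hM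
  have hMP : ∀ v, M *ᵥ v = (2⁻¹ : ℝ) • (v + P *ᵥ v) := fun v => by
    rw [hM, smul_mulVec, add_mulVec, one_mulVec]
  have hMsymm : M.IsSymm := (isSymm_one.add hsym).smul _
  have hP1 : P *ᵥ 1 = 1 := by
    ext i
    simp [mulVec, dotProduct, hrowP]
  have hM1 : M *ᵥ 1 = 1 := by
    rw [hMP, hP1, ← two_smul ℝ, smul_smul]
    norm_num
  have hfix : ∀ v : ι → ℝ, M *ᵥ v = v → ∃ c : ℝ, v = Function.const ι c := by
    intro v hv
    apply hsimple
    ext i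
    have hvi := congrFun ((hMP v).symm.trans hv) i
    simp only [Pi.smul_apply, Pi.add_apply, smul_eq_mul] at hvi
    linarith
  have hspecM : ∀ (μ : ℝ) (v : ι → ℝ), v ≠ 0 → M *ᵥ v = μ • v → μ = 1 ∨ |μ| < 1 := by
    intro μ v hv hMv
    have hPv : P *ᵥ v = (2 * μ - 1) • v := by
      ext i
      have hvi := congrFun ((hMP v).symm.trans hMv) i
      simp only [Pi.smul_apply, Pi.add_apply, smul_eq_mul] at hvi ⊢
      linarith
    rcases hspec _ v hv hPv with h | h
    · left; linarith
    · right; rw [abs_lt] at h ⊢; constructor <;> linarith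
  have hMherm : M.IsHermitian := by
    rwa [IsHermitian, conjTranspose_eq_transpose_of_trivial]
  obtain ⟨L, hL⟩ := hMherm.exists_tendsto_pow hspecM
  rw [← mulVec_eq_const_of_tendsto_pow hMsymm hM1 hfix hL x]
  refine ((continuous_id.matrix_mulVec continuous_const).tendsto L |>.comp hL).congr fun r => ?_
  show M ^ r *ᵥ x = _
  rw [hM, smul_pow, smul_mulVec]

-- `filterWeight P V` is the unnormalized iterate `U` of the paper, `filterStep P V` its row
-- normalization.
noncomputable def filterWeight {ι κ : Type*} [Fintype ι] (P : Matrix ι ι ℝ) (V : Matrix ι κ ℝ) :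
    Matrix ι κ ℝ :=
  fun i l => V i l * ∏ j, V j l ^ P i j

noncomputable def filterStep {ι κ : Type*} [Fintype ι] [Fintype κ] (P : Matrix ι ι ℝ)
    (V : Matrix ι κ ℝ) : Matrix ι κ ℝ :=
  fun i l => filterWeight P V i l / ∑ l', filterWeight P V i l'

noncomputable def logRatio {ι κ : Type*} (V : Matrix ι κ ℝ) (l k : κ) : ι → ℝ :=
  fun i => log (V i l) - log (V i k)

theorem exp_logRatio {ι κ : Type*} {V : Matrix ι κ ℝ} {i : ι} {l k : κ} (hl : 0 < V i l)
    (hk : 0 < V i k) : exp (logRatio V l k i) = V i l / V i k := by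
  rw [logRatio, exp_sub, exp_log hl, exp_log hk]

section FilterStep

variable {ι κ : Type*} [Fintype ι] {P : Matrix ι ι ℝ} {V : Matrix ι κ ℝ}

theorem filterWeight_pos (hV : ∀ i l, 0 < V i l) (i : ι) (l : κ) : 0 < filterWeight P V i l :=
  mul_pos (hV i l) (Finset.prod_pos fun j _ => rpow_pos_of_pos (hV j l) _)

theorem sum_filterWeight_pos [Fintype κ] [Nonempty κ] (hV : ∀ i l, 0 < V i l) (i : ι) :
    0 < ∑ l, filterWeight P V i l :=
  Finset.sum_pos (fun l _ => filterWeight_pos hV i l) Finset.univ_nonempty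

theorem filterStep_pos [Fintype κ] [Nonempty κ] (hV : ∀ i l, 0 < V i l) (i : ι) (l : κ) :
    0 < filterStep P V i l :=
  div_pos (filterWeight_pos hV i l) (sum_filterWeight_pos hV i)

theorem sum_filterStep [Fintype κ] [Nonempty κ] (hV : ∀ i l, 0 < V i l) (i : ι) :
    ∑ l, filterStep P V i l = 1 := by
  simp only [filterStep]
  rw [← Finset.sum_div, div_self (sum_filterWeight_pos hV i).ne']

theorem log_filterWeight (hV : ∀ i l, 0 < V i l) (i : ι) (l : κ) :
    log (filterWeight P V i l) = log (V i l) + (P *ᵥ fun j => log (V j l)) i := by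
  have hprod : 0 < ∏ j, V j l ^ P i j := Finset.prod_pos fun j _ => rpow_pos_of_pos (hV j l) _
  rw [filterWeight, log_mul (hV i l).ne' hprod.ne',
    log_prod fun j _ => (rpow_pos_of_pos (hV j l) _).ne']
  simp only [log_rpow (hV _ l), mulVec, dotProduct]

theorem logRatio_filterStep [DecidableEq ι] [Fintype κ] [Nonempty κ] (hV : ∀ i l, 0 < V i l)
    (l k : κ) : logRatio (filterStep P V) l k = (1 + P) *ᵥ logRatio V l k := by
  ext i
  have hZ := (sum_filterWeight_pos (P := P) hV i).ne'
  change log (filterStep P V i l) - log (filterStep P V i k) =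
    ((1 + P) *ᵥ ((fun j => log (V j l)) - fun j => log (V j k))) i
  simp only [filterStep]
  rw [log_div (filterWeight_pos hV i l).ne' hZ, log_div (filterWeight_pos hV i k).ne' hZ,
    log_filterWeight hV, log_filterWeight hV, add_mulVec, one_mulVec, mulVec_sub]
  simp only [Pi.add_apply, Pi.sub_apply]
  ring

end FilterStep

theorem tendsto_logRatio_atBot {ι κ : Type*} [Fintype ι] [DecidableEq ι] [Fintype κ]
    {P : Matrix ι ι ℝ} (hsym : P.IsSymm) (hrowP : ∀ i, ∑ j, P i j = 1)
    (hsimple : ∀ v : ι → ℝ, P *ᵥ v = v → ∃ c : ℝ, v = Function.const ι c)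
    (hspec : ∀ (μ : ℝ) (v : ι → ℝ), v ≠ 0 → P *ᵥ v = μ • v → μ = 1 ∨ |μ| < 1)
    {W : ℕ → Matrix ι κ ℝ} (hpos : ∀ r i l, 0 < W r i l)
    (hstep : ∀ r, W (r + 1) = filterStep P (W r)) {l k : κ}
    (hlk : ∏ j, W 0 j l < ∏ j, W 0 j k) (i : ι) :
    Tendsto (fun r => logRatio (W r) l k i) atTop atBot := by
  have : Nonempty κ := ⟨k⟩
  have hiter : ∀ r, logRatio (W r) l k = (1 + P) ^ r *ᵥ logRatio (W 0) l k := by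
    intro r
    induction r with
    | zero => simp
    | succ r ih => rw [hstep, logRatio_filterStep (hpos r), ih, mulVec_mulVec, ← pow_succ']
  have hmean : (∑ j, logRatio (W 0) l k j) / Fintype.card ι < 0 := by
    refine div_neg_of_neg_of_pos ?_ (Nat.cast_pos.mpr (Fintype.card_pos_iff.mpr ⟨i⟩))
    simp only [logRatio, Finset.sum_sub_distrib,
      ← log_prod fun j _ => (hpos 0 j _).ne']
    linarith [log_lt_log (Finset.prod_pos fun j _ => hpos 0 j l) hlk]
  have hscaled := tendsto_pi_nhds.mp
    (tendsto_two_inv_pow_smul_one_add_pow_mulVec hsym hrowP hsimple hspec (logRatio (W 0) l k)) i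
  refine ((tendsto_pow_atTop_atTop_of_one_lt one_lt_two).atTop_mul_neg hmean hscaled).congr
    fun r => ?_
  rw [Pi.smul_apply, smul_eq_mul, ← mul_assoc, ← mul_pow, hiter r]
  norm_num

theorem tendsto_pi_single_of_tendsto_div_zero {κ : Type*} [Fintype κ] [DecidableEq κ]
    {v : ℕ → κ → ℝ} {k : κ} (hk : ∀ r, v r k ≠ 0) (hsum : ∀ r, ∑ l, v r l = 1)
    (hratio : ∀ l, l ≠ k → Tendsto (fun r => v r l / v r k) atTop (𝓝 0)) :
    Tendsto v atTop (𝓝 (Pi.single k 1)) := by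
  have hq : Tendsto (fun r l => v r l / v r k) atTop (𝓝 (Pi.single k 1)) := by
    refine tendsto_pi_nhds.mpr fun l => ?_
    by_cases hl : l = k
    · subst hl
      simp [div_self (hk _)]
    · simpa [Pi.single_apply, hl] using hratio l hl
  have hqsum : Tendsto (fun r => ∑ l, v r l / v r k) atTop (𝓝 1) := by
    simpa using tendsto_finsetSum Finset.univ fun l _ => tendsto_pi_nhds.mp hq l
  have := (hqsum.inv₀ one_ne_zero).smul hq
  simp only [inv_one, one_smul] at this
  refine this.congr fun r => ?_
  ext l
  simp only [← Finset.sum_div, hsum, one_div, inv_inv, Pi.smul_apply, smul_eq_mul]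
  exact mul_div_cancel₀ (v r l) (hk r)

theorem stmt_6_general {n K : ℕ} (A : Matrix (Fin n) (Fin K) ℝ)
    (hApos : ∀ i k, 0 < A i k)
    (P : Matrix (Fin n) (Fin n) ℝ) (hsym : P.IsSymm)
    (hrowP : ∀ i, ∑ j, P i j = 1)
    (hsimple : ∀ v : Fin n → ℝ, P.mulVec v = v → ∃ c : ℝ, v = Function.const (Fin n) c)
    (hspec : ∀ (μ : ℝ) (v : Fin n → ℝ), v ≠ 0 → P.mulVec v = μ • v → μ = 1 ∨ |μ| < 1)
    (k : Fin K)
    (hk : ∀ l : Fin K, l ≠ k → ∏ j, A j l < ∏ j, A j k)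
    (W : ℕ → Matrix (Fin n) (Fin K) ℝ)
    (hW0 : W 0 = A)
    (hWiter : ∀ r i k',
      W (r + 1) i k' =
        (W r i k' * ∏ j, (W r j k') ^ (P i j)) /
          (∑ k'', W r i k'' * ∏ j, (W r j k'') ^ (P i j))) :
    ∀ i, Filter.Tendsto (fun r => W r i) Filter.atTop
      (nhds (fun k' : Fin K => if k' = k then (1 : ℝ) else 0)) := by
  have : Nonempty (Fin K) := ⟨k⟩
  have hstep : ∀ r, W (r + 1) = filterStep P (W r) := fun r => by ext i l; exact hWiter r i l
  have hpos : ∀ r i l, 0 < W r i l := by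
    intro r
    induction r with
    | zero => rwa [hW0]
    | succ r ih => rw [hstep]; exact filterStep_pos ih
  intro i
  rw [← tendsto_add_atTop_iff_nat 1, show (fun k' : Fin K => if k' = k then (1 : ℝ) else 0) =
    Pi.single k 1 from funext fun k' => (Pi.single_apply k 1 k').symm]
  refine tendsto_pi_single_of_tendsto_div_zero (fun r => (hpos _ i k).ne')
    (fun r => by rw [hstep]; exact sum_filterStep (hpos r) i) fun l hl => ?_
  have hlog := tendsto_logRatio_atBot hsym hrowP hsimple hspec hpos hstep (hW0 ▸ hk l hl) i
  simpa only [Function.comp_def, exp_logRatio (hpos _ i l) (hpos _ i k)] using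
    tendsto_exp_atBot.comp (hlog.comp (tendsto_add_atTop_nat 1))

/-- If `1` is a simple eigenvalue of the symmetric stochastic matrix `P` and
all other eigenvalues have absolute value `< 1`, and if the `k`-th column of `A`
has the strictly largest entry product, then all rows of the iterates of the
multiplicative filtering scheme (ε = 0) converge to the `k`-th unit vector. -/
theorem stmt_6 {n K : ℕ} (A : Matrix (Fin n) (Fin K) ℝ)
    (hApos : ∀ i k, 0 < A i k) (hArow : ∀ i, ∑ k, A i k = 1)
    (P : Matrix (Fin n) (Fin n) ℝ) (hsym : P.IsSymm)
    (hnonneg : ∀ i j, 0 ≤ P i j) (hrowP : ∀ i, ∑ j, P i j = 1)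
    (hsimple : ∀ v : Fin n → ℝ, P.mulVec v = v → ∃ c : ℝ, v = Function.const (Fin n) c)
    (hspec : ∀ (μ : ℝ) (v : Fin n → ℝ), v ≠ 0 → P.mulVec v = μ • v → μ = 1 ∨ |μ| < 1)
    (k : Fin K)
    (hk : ∀ l : Fin K, l ≠ k → ∏ j, A j l < ∏ j, A j k)
    (W : ℕ → Matrix (Fin n) (Fin K) ℝ)
    (hW0 : W 0 = A)
    (hWiter : ∀ r i k',
      W (r + 1) i k' =
        (W r i k' * ∏ j, (W r j k') ^ (P i j)) /
          (∑ k'', W r i k'' * ∏ j, (W r j k'') ^ (P i j))) :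
    ∀ i, Filter.Tendsto (fun r => W r i) Filter.atTop
      (nhds (fun k' : Fin K => if k' = k then (1 : ℝ) else 0)) :=
  stmt_6_general A hApos P hsym hrowP hsimple hspec k hk W hW0 hWiter
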